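/- Let C and K be convex bodies in ℝ^n, let δ ≥ 0, and let T : ℝ^n → ℝ^n be an invertible affine map with linear part A (so det A ≠ 0). Then the T(C)-floating body of T(K) at parameter δ equals the image under T of the C-floating body of K at parameter δ/|det A|: (T(K))_δ^{T(C)} = T( K_{δ/|det A|}^C ). -/
import Mathlib


open MeasureTheory
open scoped Pointwise

/-- The `C`-floating body `K_δ^C` of `K ⊆ ℝⁿ`: the intersection of all translates `x + C` of `C`
that cut off from `K` a set of volume at most `δ`. -/
def floatingBody (n : ℕ) (C : Set (EuclideanSpace ℝ (Fin n))) (δ : ℝ)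
    (K : Set (EuclideanSpace ℝ (Fin n))) : Set (EuclideanSpace ℝ (Fin n)) :=
  ⋂ x ∈ {x : EuclideanSpace ℝ (Fin n) |
      volume (K \ (x +ᵥ C)) ≤ ENNReal.ofReal δ}, (x +ᵥ C)

/-- For an invertible affine map `T v = A v + b` on `ℝⁿ` and convex bodies
`C`, `K`, the `T(C)`-floating body of `T(K)` at parameter `δ` is the image under `T` of the
`C`-floating body of `K` at parameter `δ / |det A|`. -/
theorem floatingBody_affine_image (n : ℕ)
    (C K : Set (EuclideanSpace ℝ (Fin n)))
    (hCcomp : IsCompact C) (hCconv : Convex ℝ C) (hCint : (interior C).Nonempty)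
    (hKcomp : IsCompact K) (hKconv : Convex ℝ K) (hKint : (interior K).Nonempty)
    (δ : ℝ) (hδ : 0 ≤ δ)
    (A : EuclideanSpace ℝ (Fin n) →ₗ[ℝ] EuclideanSpace ℝ (Fin n))
    (hA : LinearMap.det A ≠ 0) (b : EuclideanSpace ℝ (Fin n)) :
    floatingBody n ((fun v => A v + b) '' C) δ ((fun v => A v + b) '' K) =
      (fun v => A v + b) '' floatingBody n C (δ / |LinearMap.det A|) K := by
  set T : EuclideanSpace ℝ (Fin n) → EuclideanSpace ℝ (Fin n) := fun v => A v + b with hT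
  have hd : 0 < |LinearMap.det A| := abs_pos.mpr hA
  have hAbij : Function.Bijective (A : EuclideanSpace ℝ (Fin n) → EuclideanSpace ℝ (Fin n)) := by
    have h := (A.equivOfDetNeZero hA).bijective
    have hcoe : ⇑(A.equivOfDetNeZero hA) = ⇑A := by
      ext v
      simp [LinearMap.equivOfDetNeZero, LinearEquiv.ofIsUnitDet_apply]
    rwa [hcoe] at h
  have hTbij : Function.Bijective T := by
    constructor
    · intro x y hxy
      exact hAbij.1 (by simpa [hT] using hxy)
    · intro y
      obtain ⟨x, hx⟩ := hAbij.2 (y - b)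
      exact ⟨x, by simp [hT, hx]⟩
  -- T maps a translate of S to a translate of T '' S
  have key : ∀ (x : EuclideanSpace ℝ (Fin n)) (S : Set (EuclideanSpace ℝ (Fin n))),
      T '' (x +ᵥ S) = A x +ᵥ (T '' S) := by
    intro x S
    rw [← Set.image_vadd, ← Set.image_vadd, Set.image_image, Set.image_image]
    apply Set.image_congr'
    intro c
    simp only [hT, vadd_eq_add, map_add]
    abel
  -- volume scaling under T
  have hvol : ∀ s : Set (EuclideanSpace ℝ (Fin n)),
      volume (T '' s) = ENNReal.ofReal |LinearMap.det A| * volume s := by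
    intro s
    have h1 : T '' s = b +ᵥ (⇑A '' s) := by
      rw [← Set.image_vadd, Set.image_image]
      apply Set.image_congr'
      intro c
      simp [hT, vadd_eq_add, add_comm]
    rw [h1, measure_vadd, Measure.addHaar_image_linearMap]
  have hcond : ∀ x : EuclideanSpace ℝ (Fin n),
      volume ((T '' K) \ (A x +ᵥ T '' C)) ≤ ENNReal.ofReal δ ↔
      volume (K \ (x +ᵥ C)) ≤ ENNReal.ofReal (δ / |LinearMap.det A|) := by
    intro x
    rw [← key, ← Set.image_diff hTbij.1, hvol, ENNReal.ofReal_div_of_pos hd, mul_comm]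
    exact (ENNReal.le_div_iff_mul_le (Or.inl (ENNReal.ofReal_pos.mpr hd).ne')
      (Or.inl ENNReal.ofReal_ne_top)).symm
  have hset : {y : EuclideanSpace ℝ (Fin n) |
        volume ((T '' K) \ (y +ᵥ T '' C)) ≤ ENNReal.ofReal δ}
      = ⇑A '' {x : EuclideanSpace ℝ (Fin n) |
        volume (K \ (x +ᵥ C)) ≤ ENNReal.ofReal (δ / |LinearMap.det A|)} := by
    ext y
    obtain ⟨x, rfl⟩ := hAbij.2 y
    simp only [Set.mem_setOf_eq, Set.mem_image]
    constructor
    · intro h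
      exact ⟨x, (hcond x).mp h, rfl⟩
    · rintro ⟨x', hx', hxx⟩
      cases hAbij.1 hxx
      exact (hcond x).mpr hx'
  unfold floatingBody
  rw [hset, Set.biInter_image, Set.image_iInter₂ hTbij]
  exact Set.iInter₂_congr fun x hx => (key x C).symm
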